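/- Derivative interpolation with exponent 4/7 (Lemma S2): For every B₀ > 0 there exists a constant C depending only on B₀ with the following property. If h₁, h₂ : [0,1] → ℝ are three times continuously differentiable with ‖h₁⁗′‖_∞ ≤ B₀ and ‖h₂‴‖_∞ ≤ B₀ (i.e., both third derivatives are bounded by B₀ in sup norm on [0,1]), then for every s ∈ (0,1) satisfying min{s, 1−s} ≥ (∫₀¹ (h₁(u) − h₂(u))² du)^{1/7}, one has |h₁′(s) − h₂′(s)| ≤ C (∫₀¹ (h₁(u) − h₂(u))² du)^{2/7}. -/

import Mathlib

/-!
Write `h = h₁ - h₂`, whose third derivative is bounded by `2 B₀`. On a window `[s, s + t]` the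
derivative `h'(s)` is recovered by integrating `h` against a fixed quadratic weight of size
`t⁻²` that reproduces `q'(0)` for every quadratic `q`; replacing `h` by its second-order Taylor
polynomial costs `O(B₀ t²)`, so `|h'(s)| ≲ t⁻² ∫ₛ^{s+t} |h| + B₀ t²`. By AM-GM the integral is at
most `t⁴` as soon as `‖h‖₂² ≤ t⁷`, and the choice `t = ‖h‖₂^{2/7}` balances the two terms.
-/

open MeasureTheory Set intervalIntegral Filter Topology Interval

/-- The Riesz representative in `L²[0, r]` of the functional `q ↦ q'(0)` on quadratics. -/
noncomputable def derivWeight (r v : ℝ) : ℝ :=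
  (-36 * r ^ 2 + 192 * r * v - 180 * v ^ 2) / r ^ 4

@[fun_prop]
theorem continuous_derivWeight (r : ℝ) : Continuous (derivWeight r) := by
  unfold derivWeight; fun_prop

theorem integral_derivWeight_mul_quadratic {r : ℝ} (hr : r ≠ 0) (c₀ c₁ c₂ : ℝ) :
    ∫ v in (0 : ℝ)..r, derivWeight r v * (c₀ + c₁ * v + c₂ * v ^ 2) = c₁ := by
  -- `v ^ 1` rather than `v`, so that `integral_pow` applies to every monomial
  have expand : ∀ v : ℝ, derivWeight r v * (c₀ + c₁ * v + c₂ * v ^ 2) =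
      -36 * r ^ 2 * c₀ / r ^ 4 + (192 * r * c₀ - 36 * r ^ 2 * c₁) / r ^ 4 * v ^ 1
        + (-180 * c₀ + 192 * r * c₁ - 36 * r ^ 2 * c₂) / r ^ 4 * v ^ 2
        + (-180 * c₁ + 192 * r * c₂) / r ^ 4 * v ^ 3 + -180 * c₂ / r ^ 4 * v ^ 4 := by
    intro v; unfold derivWeight; field_simp; ring
  simp only [expand]
  simp (disch := exact Continuous.intervalIntegrable (by fun_prop) _ _) only
    [intervalIntegral.integral_add, intervalIntegral.integral_const_mul, integral_pow,
      intervalIntegral.integral_const, smul_eq_mul]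
  field_simp
  ring

theorem abs_derivWeight_le {r v : ℝ} (hv : v ∈ Icc 0 r) : |derivWeight r v| ≤ 36 / r ^ 2 := by
  obtain ⟨hv₀, hvr⟩ := hv
  rcases (hv₀.trans hvr).eq_or_lt with rfl | hr
  · simp [derivWeight]
  have hpoly : |-36 * r ^ 2 + 192 * r * v - 180 * v ^ 2| ≤ 36 * r ^ 2 :=
    abs_le.2 ⟨by nlinarith [mul_nonneg hv₀ (sub_nonneg.2 hvr)],
      by nlinarith [sq_nonneg (15 * v - 8 * r)]⟩
  calc |derivWeight r v| ≤ 36 * r ^ 2 / r ^ 4 := by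
        rw [derivWeight, abs_div, abs_of_pos (pow_pos hr 4)]
        exact div_le_div_of_nonneg_right hpoly (pow_pos hr 4).le
    _ = 36 / r ^ 2 := by field_simp

theorem iteratedDerivWithin_subset {𝕜 F : Type*} [NontriviallyNormedField 𝕜]
    [NormedAddCommGroup F] [NormedSpace 𝕜 F] {f : 𝕜 → F} {s t : Set 𝕜} {x : 𝕜} {n : ℕ}
    (st : s ⊆ t) (hs : UniqueDiffOn 𝕜 s) (ht : UniqueDiffOn 𝕜 t) (hf : ContDiffOn 𝕜 n f t)
    (hx : x ∈ s) : iteratedDerivWithin n f s x = iteratedDerivWithin n f t x := by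
  simp only [iteratedDerivWithin_eq_iteratedFDerivWithin,
    iteratedFDerivWithin_subset st hs ht hf hx]

theorem integral_abs_le_integral_sq_div_add {f : ℝ → ℝ} {a b ε : ℝ} (hab : a ≤ b) (hε : 0 < ε)
    (hf : ContinuousOn f (Icc a b)) :
    ∫ u in a..b, |f u| ≤ (∫ u in a..b, f u ^ 2) / (2 * ε) + ε * (b - a) / 2 := by
  have amgm : ∀ u, |f u| ≤ f u ^ 2 / (2 * ε) + ε / 2 := fun u => by
    rw [div_add_div _ _ (by positivity) two_ne_zero, le_div_iff₀ (by positivity)]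
    nlinarith [sq_nonneg (|f u| - ε), sq_abs (f u)]
  have hf' : ContinuousOn f (uIcc a b) := by rwa [uIcc_of_le hab]
  have hsq : IntervalIntegrable (fun u => f u ^ 2 / (2 * ε)) volume a b :=
    ((hf'.pow 2).div_const _).intervalIntegrable
  calc ∫ u in a..b, |f u| ≤ ∫ u in a..b, (f u ^ 2 / (2 * ε) + ε / 2) :=
        integral_mono_on hab (hf'.abs.intervalIntegrable)
          (hsq.add intervalIntegrable_const) fun u _ => amgm u
    _ = (∫ u in a..b, f u ^ 2) / (2 * ε) + ε * (b - a) / 2 := by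
        rw [intervalIntegral.integral_add hsq intervalIntegrable_const,
          intervalIntegral.integral_div, intervalIntegral.integral_const, smul_eq_mul]
        ring

theorem taylorWithinEval_two (g : ℝ → ℝ) (s : Set ℝ) (x₀ x : ℝ) :
    taylorWithinEval g 2 s x₀ x = g x₀ + derivWithin g s x₀ * (x - x₀)
      + iteratedDerivWithin 2 g s x₀ / 2 * (x - x₀) ^ 2 := by
  simp [taylor_within_apply]
  ring

theorem abs_derivWithin_Icc_left_le {g : ℝ → ℝ} {a b B : ℝ} (hab : a < b)
    (hg : ContDiffOn ℝ 3 g (Icc a b))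
    (hB : ∀ u ∈ Icc a b, |iteratedDerivWithin 3 g (Icc a b) u| ≤ B) :
    |derivWithin g (Icc a b) a| ≤
      36 / (b - a) ^ 2 * (∫ u in a..b, |g u|) + 18 * B * (b - a) ^ 2 := by
  set r := b - a
  set P := taylorWithinEval g 2 (Icc a b) a
  set w := fun u => derivWeight r (u - a)
  have hr : 0 < r := sub_pos.2 hab
  have hB₀ : 0 ≤ B := (abs_nonneg _).trans (hB a ⟨le_rfl, hab.le⟩)
  have hw : ∀ u ∈ Ι a b, |w u| ≤ 36 / r ^ 2 := fun u hu => by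
    rw [uIoc_of_le hab.le] at hu
    exact abs_derivWeight_le ⟨sub_nonneg.2 hu.1.le, sub_le_sub_right hu.2 a⟩
  have moment : ∫ u in a..b, w u * P u = derivWithin g (Icc a b) a := by
    simp only [w, P, taylorWithinEval_two]
    rw [intervalIntegral.integral_comp_sub_right (fun v => derivWeight r v *
      (g a + derivWithin g (Icc a b) a * v + iteratedDerivWithin 2 g (Icc a b) a / 2 * v ^ 2)),
      sub_self]
    exact integral_derivWeight_mul_quadratic hr.ne' _ _ _
  have remainder : ∀ u ∈ Ι a b, |g u - P u| ≤ B * r ^ 3 / 2 := fun u hu => by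
    rw [uIoc_of_le hab.le] at hu
    have taylor := taylor_mean_remainder_bound (n := 2) hab.le hg (Ioc_subset_Icc_self hu) hB
    calc |g u - P u| ≤ B * (u - a) ^ 3 / 2 := by simpa [P, Nat.factorial] using taylor
      _ ≤ B * r ^ 3 / 2 := by gcongr; exacts [sub_nonneg.2 hu.1.le, sub_le_sub_right hu.2 a]
  have hgc : ContinuousOn g (uIcc a b) := uIcc_of_le hab.le ▸ hg.continuousOn
  have hwg : IntervalIntegrable (fun u => w u * g u) volume a b :=
    ((continuous_derivWeight r).comp (continuous_sub_right a)
      |>.continuousOn.mul hgc).intervalIntegrable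
  have hwP : IntervalIntegrable (fun u => w u * P u) volume a b := by
    simp only [w, P, taylorWithinEval_two]
    exact Continuous.intervalIntegrable (by fun_prop) _ _
  have main : |∫ u in a..b, w u * g u| ≤ 36 / r ^ 2 * ∫ u in a..b, |g u| := by
    rw [← intervalIntegral.integral_const_mul, ← Real.norm_eq_abs]
    refine intervalIntegral.norm_integral_le_of_norm_le hab.le (ae_of_all _ fun u hu => ?_)
      (hgc.abs.intervalIntegrable.const_mul _)
    rw [norm_mul, Real.norm_eq_abs, Real.norm_eq_abs]
    exact mul_le_mul_of_nonneg_right (hw u (by rwa [uIoc_of_le hab.le])) (abs_nonneg _)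
  have error : |∫ u in a..b, w u * (g u - P u)| ≤ 18 * B * r ^ 2 := by
    calc |∫ u in a..b, w u * (g u - P u)| ≤ 36 / r ^ 2 * (B * r ^ 3 / 2) * |b - a| := by
          rw [← Real.norm_eq_abs]
          refine intervalIntegral.norm_integral_le_of_norm_le_const fun u hu => ?_
          rw [norm_mul, Real.norm_eq_abs, Real.norm_eq_abs]
          exact mul_le_mul (hw u hu) (remainder u hu) (abs_nonneg _) (by positivity)
      _ = 18 * B * r ^ 2 := by rw [abs_of_pos hr]; field_simp; ring
  have split : ∫ u in a..b, w u * (g u - P u) =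
      (∫ u in a..b, w u * g u) - derivWithin g (Icc a b) a := by
    simp only [mul_sub, ← moment, intervalIntegral.integral_sub hwg hwP]
  calc |derivWithin g (Icc a b) a|
      = |(∫ u in a..b, w u * g u) - ∫ u in a..b, w u * (g u - P u)| := by
        rw [split, sub_sub_cancel]
    _ ≤ _ := (abs_sub _ _).trans (add_le_add main error)

theorem abs_derivWithin_le_of_integral_sq_le {g : ℝ → ℝ} {a b s t B : ℝ}
    (hg : ContDiffOn ℝ 3 g (Icc a b))
    (hB : ∀ u ∈ Icc a b, |iteratedDerivWithin 3 g (Icc a b) u| ≤ B)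
    (hs : a ≤ s) (ht : 0 < t) (hst : s + t ≤ b) (hD : ∫ u in a..b, g u ^ 2 ≤ t ^ 7) :
    |derivWithin g (Icc a b) s| ≤ (36 + 18 * B) * t ^ 2 := by
  have hsub : Icc s (s + t) ⊆ Icc a b := Icc_subset_Icc hs hst
  have hwin : s < s + t := lt_add_of_pos_right s ht
  have hab : a < b := hs.trans_lt (hwin.trans_le hst)
  have restrict : ∀ n ≤ 3, ∀ u ∈ Icc s (s + t),
      iteratedDerivWithin n g (Icc s (s + t)) u = iteratedDerivWithin n g (Icc a b) u :=
    fun n hn u hu => iteratedDerivWithin_subset hsub (uniqueDiffOn_Icc hwin)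
      (uniqueDiffOn_Icc hab) (hg.of_le (by exact_mod_cast hn)) hu
  have hwindow := abs_derivWithin_Icc_left_le hwin (hg.mono hsub)
    fun u hu => (restrict 3 le_rfl u hu).symm ▸ hB u (hsub hu)
  have hsmem : s ∈ Icc s (s + t) := left_mem_Icc.2 hwin.le
  rw [← iteratedDerivWithin_one, restrict 1 (by norm_num) s hsmem, iteratedDerivWithin_one,
    add_sub_cancel_left] at hwindow
  have hL1 : ∫ u in s..s + t, |g u| ≤ t ^ 4 :=
    calc ∫ u in s..s + t, |g u|
        ≤ (∫ u in s..s + t, g u ^ 2) / (2 * t ^ 3) + t ^ 3 * (s + t - s) / 2 :=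
          integral_abs_le_integral_sq_div_add hwin.le (pow_pos ht 3) (hg.continuousOn.mono hsub)
      _ ≤ t ^ 7 / (2 * t ^ 3) + t ^ 3 * (s + t - s) / 2 := by
          gcongr
          refine (integral_mono_interval hs hwin.le hst (ae_of_all _ fun u => sq_nonneg (g u))
            ?_).trans hD
          exact ((hg.continuousOn.pow 2).mono (uIcc_of_le hab.le).subset).intervalIntegrable
      _ = t ^ 4 := by field_simp; ring
  calc |derivWithin g (Icc a b) s| ≤ 36 / t ^ 2 * (∫ u in s..s + t, |g u|) + 18 * B * t ^ 2 :=
        hwindow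
    _ ≤ 36 / t ^ 2 * t ^ 4 + 18 * B * t ^ 2 := by gcongr
    _ = (36 + 18 * B) * t ^ 2 := by field_simp

theorem le_mul_rpow_of_forall_le_pow {y c D m : ℝ} {n k : ℕ} (hn : n ≠ 0) (hk : k ≠ 0)
    (hD : 0 ≤ D) (hm : 0 < m) (hDm : D ^ ((1 : ℝ) / n) ≤ m)
    (h : ∀ t, 0 < t → t ≤ m → D ≤ t ^ n → y ≤ c * t ^ k) : y ≤ c * D ^ ((k : ℝ) / n) := by
  rcases hD.eq_or_lt with rfl | hD
  · rw [Real.zero_rpow (by positivity), mul_zero]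
    have hlim : Tendsto (fun t : ℝ => c * t ^ k) (𝓝[>] 0) (𝓝 0) :=
      (Continuous.tendsto' (by fun_prop) 0 0 (by simp [hk])).mono_left nhdsWithin_le_nhds
    exact ge_of_tendsto hlim (eventually_of_mem (Ioc_mem_nhdsGT hm)
      fun t ht => h t ht.1 ht.2 (pow_pos ht.1 n).le)
  · have hpow : ∀ j : ℕ, (D ^ ((1 : ℝ) / n)) ^ j = D ^ ((j : ℝ) / n) := fun j => by
      rw [← Real.rpow_natCast, ← Real.rpow_mul hD.le, one_div_mul_eq_div]
    rw [← hpow]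
    exact h _ (Real.rpow_pos_of_pos hD _) hDm (by rw [hpow, div_self (by exact_mod_cast hn),
      Real.rpow_one])

theorem deriv_interpolation_four_sevenths (B₀ : ℝ) :
    ∃ C : ℝ, ∀ h₁ h₂ : ℝ → ℝ,
      ContDiffOn ℝ 3 h₁ (Set.Icc 0 1) →
      ContDiffOn ℝ 3 h₂ (Set.Icc 0 1) →
      (∀ u ∈ Set.Icc (0 : ℝ) 1, |iteratedDerivWithin 3 h₁ (Set.Icc 0 1) u| ≤ B₀) →
      (∀ u ∈ Set.Icc (0 : ℝ) 1, |iteratedDerivWithin 3 h₂ (Set.Icc 0 1) u| ≤ B₀) →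
      ∀ s ∈ Set.Ioo (0 : ℝ) 1,
        (∫ u in (0 : ℝ)..1, (h₁ u - h₂ u) ^ 2) ^ ((1 : ℝ) / 7) ≤ min s (1 - s) →
        |derivWithin h₁ (Set.Icc 0 1) s - derivWithin h₂ (Set.Icc 0 1) s| ≤
          C * (∫ u in (0 : ℝ)..1, (h₁ u - h₂ u) ^ 2) ^ ((2 : ℝ) / 7) := by
  refine ⟨36 + 18 * (2 * B₀), fun h₁ h₂ hc₁ hc₂ hb₁ hb₂ s hs hmin => ?_⟩
  have hs₀₁ : s ∈ Icc (0 : ℝ) 1 := Ioo_subset_Icc_self hs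
  have hdiff : derivWithin h₁ (Icc 0 1) s - derivWithin h₂ (Icc 0 1) s =
      derivWithin (h₁ - h₂) (Icc 0 1) s :=
    (derivWithin_sub (hc₁.differentiableOn (by norm_num) s hs₀₁)
      (hc₂.differentiableOn (by norm_num) s hs₀₁)).symm
  have hB : ∀ u ∈ Icc (0 : ℝ) 1, |iteratedDerivWithin 3 (h₁ - h₂) (Icc 0 1) u| ≤ 2 * B₀ :=
    fun u hu => by
      rw [iteratedDerivWithin_sub hu (uniqueDiffOn_Icc one_pos) (hc₁ u hu) (hc₂ u hu)]
      linarith [abs_sub (iteratedDerivWithin 3 h₁ (Icc 0 1) u)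
        (iteratedDerivWithin 3 h₂ (Icc 0 1) u), hb₁ u hu, hb₂ u hu]
  have optimize := le_mul_rpow_of_forall_le_pow (n := 7) (k := 2) (by norm_num) (by norm_num)
    (intervalIntegral.integral_nonneg zero_le_one fun u _ => sq_nonneg (h₁ u - h₂ u))
    (sub_pos.2 hs.2) (by exact_mod_cast hmin.trans (min_le_right _ _)) fun t ht hts hDt =>
      hdiff ▸ abs_derivWithin_le_of_integral_sq_le (hc₁.sub hc₂) hB hs.1.le ht (by linarith) hDt
  exact_mod_cast optimize
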